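/- Let A be a symmetric d×d matrix with |A^D| > R ≥ 0, and let B be symmetric with |B^D| ≤ R. Then (R·Φ(A^D/R) − A^D, (tr(A−B)/d)·E_d + R·Φ(A^D/R) − B^D) = (R − |A^D|)·(R − (A^D, B^D)/|A^D|), and this quantity is ≤ (R − |A^D|)(R − |B^D|) ≤ 0. -/

import Mathlib

open Matrix

variable {d : ℕ}

/-- Frobenius inner product of matrices. -/
def finner (A B : Matrix (Fin d) (Fin d) ℝ) : ℝ := ∑ i, ∑ j, A i j * B i j

/-- Frobenius norm. -/
noncomputable def fnorm (A : Matrix (Fin d) (Fin d) ℝ) : ℝ := Real.sqrt (finner A A)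

/-- Deviatoric part `A - (tr A / d) • E_d`. -/
noncomputable def dev (A : Matrix (Fin d) (Fin d) ℝ) : Matrix (Fin d) (Fin d) ℝ :=
  A - (Matrix.trace A / (d : ℝ)) • (1 : Matrix (Fin d) (Fin d) ℝ)

/-- The truncation map Φ. -/
noncomputable def Phi (A : Matrix (Fin d) (Fin d) ℝ) : Matrix (Fin d) (Fin d) ℝ :=
  if fnorm A ≤ 1 then A else (fnorm A)⁻¹ • A

/-- The projection-type map `P_R`. -/
noncomputable def Pop (R : ℝ) (A : Matrix (Fin d) (Fin d) ℝ) : Matrix (Fin d) (Fin d) ℝ :=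
  if 0 < R then (Matrix.trace A / (d : ℝ)) • (1 : Matrix (Fin d) (Fin d) ℝ) + R • Phi (R⁻¹ • dev A)
  else (Matrix.trace A / (d : ℝ)) • (1 : Matrix (Fin d) (Fin d) ℝ)

/-! Since `|A^D| > R`, the truncation is active and `R Φ(A^D/R) = (R/|A^D|) A^D` is a multiple of
`A^D`. The trace-free matrix `A^D` is orthogonal to `E_d`, so the inner product expands to
`(R - |A^D|)(R - (A^D, B^D)/|A^D|)`, and Cauchy–Schwarz `(A^D, B^D) ≤ |A^D| |B^D|` gives the
inequalities. -/

lemma finner_self_nonneg (A : Matrix (Fin d) (Fin d) ℝ) : 0 ≤ finner A A :=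
  Finset.sum_nonneg fun _ _ => Finset.sum_nonneg fun _ _ => mul_self_nonneg _

lemma fnorm_nonneg (A : Matrix (Fin d) (Fin d) ℝ) : 0 ≤ fnorm A := Real.sqrt_nonneg _

lemma fnorm_sq (A : Matrix (Fin d) (Fin d) ℝ) : fnorm A ^ 2 = finner A A :=
  Real.sq_sqrt (finner_self_nonneg A)

lemma finner_smul_left (c : ℝ) (A B : Matrix (Fin d) (Fin d) ℝ) :
    finner (c • A) B = c * finner A B := by
  simp only [finner, Matrix.smul_apply, smul_eq_mul, Finset.mul_sum, mul_assoc]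

lemma finner_smul_right (c : ℝ) (A B : Matrix (Fin d) (Fin d) ℝ) :
    finner A (c • B) = c * finner A B := by
  simp only [finner, Matrix.smul_apply, smul_eq_mul, Finset.mul_sum, mul_left_comm]

lemma finner_add_right (A B C : Matrix (Fin d) (Fin d) ℝ) :
    finner A (B + C) = finner A B + finner A C := by
  simp only [finner, Matrix.add_apply, mul_add, Finset.sum_add_distrib]

lemma finner_sub_right (A B C : Matrix (Fin d) (Fin d) ℝ) :
    finner A (B - C) = finner A B - finner A C := by
  simp only [finner, Matrix.sub_apply, mul_sub, Finset.sum_sub_distrib]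

lemma finner_one_right (A : Matrix (Fin d) (Fin d) ℝ) : finner A 1 = A.trace := by
  simp [finner, one_apply, trace, diag]

lemma finner_le_fnorm_mul_fnorm (A B : Matrix (Fin d) (Fin d) ℝ) :
    finner A B ≤ fnorm A * fnorm B := by
  simpa [finner, fnorm, Fintype.sum_prod_type, sq] using
    Real.sum_mul_le_sqrt_mul_sqrt Finset.univ (fun p : Fin d × Fin d => A p.1 p.2)
      (fun p => B p.1 p.2)

lemma fnorm_smul (c : ℝ) (A : Matrix (Fin d) (Fin d) ℝ) : fnorm (c • A) = |c| * fnorm A := by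
  rw [fnorm, finner_smul_left, finner_smul_right, ← mul_assoc, Real.sqrt_mul (mul_self_nonneg c),
    Real.sqrt_mul_self_eq_abs c, fnorm]

lemma trace_dev (A : Matrix (Fin d) (Fin d) ℝ) : (dev A).trace = 0 := by
  rcases eq_or_ne d 0 with rfl | hd
  · exact Matrix.trace_fin_zero _
  · have hd' : (d : ℝ) ≠ 0 := Nat.cast_ne_zero.mpr hd
    simp only [dev, trace_sub, trace_smul, trace_one, Fintype.card_fin, smul_eq_mul]
    field_simp
    ring

lemma smul_Phi_inv_smul_of_lt {R : ℝ} (hR : 0 ≤ R) {C : Matrix (Fin d) (Fin d) ℝ}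
    (hC : R < fnorm C) : R • Phi (R⁻¹ • C) = (R / fnorm C) • C := by
  rcases hR.eq_or_lt with rfl | hRpos
  · simp
  have hnorm : fnorm (R⁻¹ • C) = R⁻¹ * fnorm C := by
    rw [fnorm_smul, abs_of_pos (inv_pos.2 hRpos)]
  have hout : ¬ fnorm (R⁻¹ • C) ≤ 1 := by
    rw [hnorm, not_le, ← div_eq_inv_mul, one_lt_div hRpos]
    exact hC
  rw [Phi, if_neg hout, hnorm, smul_smul, smul_smul]
  congr 1
  field_simp

lemma finner_div_fnorm_smul_sub_self {C : Matrix (Fin d) (Fin d) ℝ} (hC : C.trace = 0)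
    (hC0 : fnorm C ≠ 0) (R t : ℝ) (D : Matrix (Fin d) (Fin d) ℝ) :
    finner ((R / fnorm C) • C - C) (t • 1 + (R / fnorm C) • C - D)
      = (R - fnorm C) * (R - finner C D / fnorm C) := by
  rw [show (R / fnorm C) • C - C = (R / fnorm C - 1) • C by rw [sub_smul, one_smul],
    finner_smul_left, finner_sub_right, finner_add_right, finner_smul_right, finner_smul_right,
    finner_one_right, hC, ← fnorm_sq]
  field_simp
  ring

theorem stmt_6_general (R : ℝ)
    (A B : Matrix (Fin d) (Fin d) ℝ)
    (hAD : R < fnorm (dev A)) (hBD : fnorm (dev B) ≤ R) :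
    finner (R • Phi (R⁻¹ • dev A) - dev A)
        ((Matrix.trace (A - B) / (d : ℝ)) • (1 : Matrix (Fin d) (Fin d) ℝ)
          + R • Phi (R⁻¹ • dev A) - dev B)
      = (R - fnorm (dev A)) * (R - finner (dev A) (dev B) / fnorm (dev A))
    ∧ (R - fnorm (dev A)) * (R - finner (dev A) (dev B) / fnorm (dev A))
        ≤ (R - fnorm (dev A)) * (R - fnorm (dev B))
    ∧ (R - fnorm (dev A)) * (R - fnorm (dev B)) ≤ 0 := by
  have hR : 0 ≤ R := (fnorm_nonneg _).trans hBD
  have hA0 : 0 < fnorm (dev A) := hR.trans_lt hAD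
  rw [smul_Phi_inv_smul_of_lt hR hAD, finner_div_fnorm_smul_sub_self (trace_dev A) hA0.ne']
  refine ⟨rfl, mul_le_mul_of_nonpos_left ?_ (by linarith),
    mul_nonpos_of_nonpos_of_nonneg (by linarith) (by linarith)⟩
  have hCS : finner (dev A) (dev B) / fnorm (dev A) ≤ fnorm (dev B) :=
    div_le_of_le_mul₀ hA0.le (fnorm_nonneg _)
      ((finner_le_fnorm_mul_fnorm _ _).trans_eq (mul_comm _ _))
  linarith

theorem stmt_6 (hd : 2 ≤ d) (R : ℝ) (hR : 0 ≤ R)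
    (A B : Matrix (Fin d) (Fin d) ℝ) (hA : A.IsSymm) (hB : B.IsSymm)
    (hAD : R < fnorm (dev A)) (hBD : fnorm (dev B) ≤ R) :
    finner (R • Phi (R⁻¹ • dev A) - dev A)
        ((Matrix.trace (A - B) / (d : ℝ)) • (1 : Matrix (Fin d) (Fin d) ℝ)
          + R • Phi (R⁻¹ • dev A) - dev B)
      = (R - fnorm (dev A)) * (R - finner (dev A) (dev B) / fnorm (dev A))
    ∧ (R - fnorm (dev A)) * (R - finner (dev A) (dev B) / fnorm (dev A))
        ≤ (R - fnorm (dev A)) * (R - fnorm (dev B))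
    ∧ (R - fnorm (dev A)) * (R - fnorm (dev B)) ≤ 0 :=
  stmt_6_general R A B hAD hBD
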